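/- arXiv:2301.12366 — 2 statements merged into one kernel-verified Lean document; each statement's English description precedes it below -/
import Mathlib

section
/- In the one-armed bandit setting with r(t) = μ(t/T), suppose μ : [0,1] → ℝ is differentiable with |μ'(x)| ≤ L and μ'(x) ≠ 0 for all x ∈ [0,1], and assume B² ≥ 6ΔT log T and B ≥ 2 log T. Then the total regret satisfies Reg(BE(B,Δ), μ) ≤ LΔ²T + (B + 1)Δ^{−1}. -/
set_option linter.unusedSectionVars false
set_option linter.unusedVariables false
set_option maxHeartbeats 1000000


open MeasureTheory

/-- The stopping time of the Budgeted Exploration policy in epoch `i` (epochs have length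
`E = ΔT`; rounds are `1, …, T` and epoch `i` consists of rounds `i·E+1, …, (i+1)·E`):
`beS Z1 B E i ω = min{ S̃ᵢ, E − 1 }` where
`S̃ᵢ = min{ s ≥ 0 : ∑_{u=0}^{s} Z1 (i·E+1+u) ω ≤ −B }`. -/
noncomputable def beS {Ω : Type*} (Z1 : ℕ → Ω → ℝ) (B : ℝ) (E i : ℕ) (ω : Ω) : ℕ := by
  classical
  exact if h : ∃ s : ℕ, (∑ u ∈ Finset.range (s + 1), Z1 (i * E + 1 + u) ω) ≤ -B then
    min (Nat.find h) (E - 1)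
  else E - 1

/-- The arm chosen by the Budgeted Exploration policy `BE(B, Δ)` (with `E = ΔT`) at round
`t ∈ {1, …, T}`: arm 1 (`true`) while the within-epoch offset is at most the epoch's
stopping time, arm 0 (`false`) for the remaining rounds of the epoch. -/
noncomputable def beArm {Ω : Type*} (Z1 : ℕ → Ω → ℝ) (B : ℝ) (E t : ℕ) (ω : Ω) : Bool :=
  decide ((t - 1) % E ≤ beS Z1 B E ((t - 1) / E) ω)

/-- The reward collected by the Budgeted Exploration policy at round `t`. -/
noncomputable def beReward {Ω : Type*} (Z0 Z1 : ℕ → Ω → ℝ) (B : ℝ) (E t : ℕ) (ω : Ω) : ℝ :=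
  if beArm Z1 B E t ω then Z1 t ω else Z0 t ω

/-- The (expected) regret `E[∑_{t=1}^T R_t]` of the Budgeted Exploration policy over horizon
`T`, where `R_t = max{0, r t} − Z_{A_t}^t` and `r t` is the mean reward of arm 1 at round `t`. -/
noncomputable def beRegret {Ω : Type*} [MeasurableSpace Ω] (P : Measure Ω)
    (Z0 Z1 : ℕ → Ω → ℝ) (B : ℝ) (E T : ℕ) (r : ℕ → ℝ) : ℝ :=
  ∑ t ∈ Finset.Icc 1 T, (max (r t) 0 - ∫ ω, beReward Z0 Z1 B E t ω ∂P)


section MyAux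
open ProbabilityTheory Finset Real
variable {Ω : Type*} [MeasurableSpace Ω] {P : Measure Ω}

lemma my_integrable [IsFiniteMeasure P] {f : Ω → ℝ} (hf : Measurable f) {C : ℝ}
    (h : ∀ ω, |f ω| ≤ C) : Integrable f P := by
  refine (integrable_const C).mono' hf.aestronglyMeasurable ?_
  exact Filter.Eventually.of_forall (fun ω => by simpa using h ω)

lemma my_exp_quad {y : ℝ} (h : |y| ≤ 1) : Real.exp y ≤ 1 + y + y ^ 2 := by
  have h2 := Real.exp_bound h (n := 2) (by norm_num)
  have : |Real.exp y - (1 + y)| ≤ |y| ^ 2 * (3 / 4) := by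
    have e : ∑ i ∈ Finset.range 2, y ^ i / i.factorial = 1 + y := by
      simp [Finset.sum_range_succ]
    calc |Real.exp y - (1 + y)| = |Real.exp y - ∑ i ∈ Finset.range 2, y ^ i / i.factorial| := by
          rw [e]
      _ ≤ |y| ^ 2 * ((2:ℕ).succ / ((2:ℕ).factorial * 2)) := h2
      _ = |y| ^ 2 * (3 / 4) := by norm_num [Nat.factorial]
  have hy2 : |y| ^ 2 = y ^ 2 := sq_abs y
  nlinarith [abs_le.1 this, sq_nonneg y]

lemma my_iIndepFun_precomp {ι ι' : Type*} [Nonempty ι'] {β : Type*} [mβ : MeasurableSpace β]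
    {f : ι → Ω → β} (h : iIndepFun f P) (e : ι' → ι)
    (he : Function.Injective e) : iIndepFun (fun j => f (e j)) P := by
  classical
  rw [iIndepFun_iff_measure_inter_preimage_eq_mul] at h ⊢
  intro S sets hsets
  have hinv : ∀ j : ι', Function.invFun e (e j) = j := fun j =>
    Function.leftInverse_invFun he j
  have key := h (S.image e) (sets := fun i => sets (Function.invFun e i)) ?_
  · have h1 : (⋂ i ∈ S.image e, f i ⁻¹' sets (Function.invFun e i)) =
        ⋂ j ∈ S, (fun ω => f (e j) ω) ⁻¹' sets j := by
      ext ω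
      simp only [Set.mem_iInter, Finset.mem_image]
      constructor
      · intro H j hj
        have := H (e j) ⟨j, hj, rfl⟩
        rwa [hinv] at this
      · rintro H i ⟨j, hj, rfl⟩
        rw [hinv]; exact H j hj
    have h2 : ∏ i ∈ S.image e, P (f i ⁻¹' sets (Function.invFun e i)) =
        ∏ j ∈ S, P ((fun ω => f (e j) ω) ⁻¹' sets j) := by
      rw [Finset.prod_image (fun a _ b _ hab => he hab)]
      exact Finset.prod_congr rfl (fun j _ => by rw [hinv])
    rw [← h1, ← h2]; exact key
  · intro i hi
    obtain ⟨j, hj, rfl⟩ := Finset.mem_image.1 hi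
    simpa [hinv] using hsets j hj

lemma my_mgf_le [IsProbabilityMeasure P] {X : Ω → ℝ} (hX : Measurable X)
    (hb : ∀ ω, X ω ∈ Set.Icc (-1:ℝ) 1) (hmean : ∫ ω, X ω ∂P ≤ 0) {l : ℝ}
    (h0 : 0 ≤ l) (h1 : l ≤ 1) : mgf X P l ≤ Real.exp (l ^ 2) := by
  have hptw : ∀ ω, Real.exp (l * X ω) ≤ 1 + l * X ω + l ^ 2 := by
    intro ω
    obtain ⟨hl, hr⟩ := hb ω
    have habs : |l * X ω| ≤ 1 := by
      rw [abs_mul]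
      calc |l| * |X ω| ≤ 1 * 1 := by
            apply mul_le_mul (by rwa [abs_of_nonneg h0]) (abs_le.2 ⟨hl, hr⟩)
              (abs_nonneg _) zero_le_one
        _ = 1 := by ring
    have := my_exp_quad habs
    have hx2 : X ω ^ 2 ≤ 1 := by nlinarith
    have hsq : (l * X ω) ^ 2 ≤ l ^ 2 := by
      rw [mul_pow]
      calc l ^ 2 * X ω ^ 2 ≤ l ^ 2 * 1 := by nlinarith [sq_nonneg l]
        _ = l ^ 2 := mul_one _
    linarith
  have hint1 : Integrable (fun ω => Real.exp (l * X ω)) P := by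
    refine my_integrable ((hX.const_mul l).exp) (C := Real.exp 1) ?_
    intro ω
    rw [abs_of_nonneg (Real.exp_nonneg _), Real.exp_le_exp]
    obtain ⟨hl, hr⟩ := hb ω
    nlinarith
  have hiX : Integrable X P := my_integrable hX (C := 1)
    (fun ω => abs_le.2 ⟨(hb ω).1, (hb ω).2⟩)
  have hint2 : Integrable (fun ω => 1 + l * X ω + l ^ 2) P := by
    have : (fun ω => 1 + l * X ω + l ^ 2) = (fun ω => ((1:ℝ) + l ^ 2) + l * X ω) := by
      funext ω; ring
    rw [this]
    exact (integrable_const _).add (hiX.const_mul l)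
  have h1' : mgf X P l = ∫ ω, Real.exp (l * X ω) ∂P := rfl
  rw [h1']
  calc ∫ ω, Real.exp (l * X ω) ∂P ≤ ∫ ω, (1 + l * X ω + l ^ 2) ∂P :=
        integral_mono hint1 hint2 hptw
    _ = (1 + l ^ 2) + l * (∫ ω, X ω ∂P) := by
        have e : (fun ω => 1 + l * X ω + l ^ 2) = (fun ω => ((1:ℝ) + l ^ 2) + l * X ω) := by
          funext ω; ring
        rw [e, integral_add (integrable_const _) (hiX.const_mul l), integral_const,
          integral_const_mul]
        simp
    _ ≤ 1 + l ^ 2 := by nlinarith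
    _ ≤ Real.exp (l ^ 2) := by have := Real.add_one_le_exp (l ^ 2); linarith

lemma my_chernoff [IsProbabilityMeasure P] {X : ℕ → Ω → ℝ}
    (hind : iIndepFun X P)
    (hmeas : ∀ v, Measurable (X v)) (hb : ∀ v ω, X v ω ∈ Set.Icc (-1:ℝ) 1)
    (n : ℕ) (hmean : ∀ v < n, 0 ≤ ∫ ω, X v ω ∂P)
    {B l : ℝ} (h0 : 0 ≤ l) (h1 : l ≤ 1) :
    (P {ω | ∑ v ∈ Finset.range n, X v ω ≤ -B}).toReal ≤ Real.exp (n * l ^ 2 - l * B) := by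
  have hindY : iIndepFun
      (fun v ω => -(X v ω)) P :=
    hind.comp (fun _ => Neg.neg) (fun _ => measurable_neg)
  have hmeasY : ∀ v, Measurable (fun ω => -(X v ω)) := fun v => (hmeas v).neg
  have hfun : (∑ v ∈ Finset.range n, fun ω => -(X v ω))
      = fun ω => -∑ v ∈ Finset.range n, X v ω := by
    funext ω
    rw [Finset.sum_apply, Finset.sum_neg_distrib]
  have hseq : {ω | ∑ v ∈ Finset.range n, X v ω ≤ -B}
      = {ω | B ≤ (fun ω => -∑ v ∈ Finset.range n, X v ω) ω} := by
    ext ω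
    simp only [Set.mem_setOf_eq]
    constructor <;> intro h <;> linarith
  have hSb : ∀ ω, |∑ v ∈ Finset.range n, X v ω| ≤ n := by
    intro ω
    calc |∑ v ∈ Finset.range n, X v ω| ≤ ∑ v ∈ Finset.range n, |X v ω| :=
          Finset.abs_sum_le_sum_abs _ _
      _ ≤ ∑ v ∈ Finset.range n, 1 :=
          Finset.sum_le_sum (fun v _ => abs_le.2 ⟨(hb v ω).1, (hb v ω).2⟩)
      _ = n := by simp
  have hint : Integrable
      (fun ω => Real.exp (l * (fun ω => -∑ v ∈ Finset.range n, X v ω) ω)) P := by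
    refine my_integrable ?_ (C := Real.exp (l * n)) ?_
    · exact ((Finset.measurable_sum (Finset.range n) (fun v _ => hmeas v)).neg.const_mul l).exp
    · intro ω
      rw [abs_of_nonneg (Real.exp_nonneg _), Real.exp_le_exp]
      have h2 := (abs_le.1 (hSb ω)).1
      simp only []
      nlinarith
  rw [hseq]
  have hmgf : mgf (fun ω => -∑ v ∈ Finset.range n, X v ω) P l
      = ∏ v ∈ Finset.range n, mgf (fun ω => -(X v ω)) P l := by
    rw [← hfun]
    exact hindY.mgf_sum hmeasY _
  calc (P {ω | B ≤ (fun ω => -∑ v ∈ Finset.range n, X v ω) ω}).toReal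
      ≤ Real.exp (-l * B) * mgf (fun ω => -∑ v ∈ Finset.range n, X v ω) P l :=
        measure_ge_le_exp_mul_mgf B h0 hint
    _ = Real.exp (-l * B) * ∏ v ∈ Finset.range n, mgf (fun ω => -(X v ω)) P l := by
        rw [hmgf]
    _ ≤ Real.exp (-l * B) * ∏ v ∈ Finset.range n, Real.exp (l ^ 2) := by
        refine mul_le_mul_of_nonneg_left ?_ (Real.exp_nonneg _)
        refine Finset.prod_le_prod (fun v _ => mgf_nonneg) (fun v hv => ?_)
        refine my_mgf_le (hmeasY v) (fun ω => ?_) ?_ h0 h1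
        · exact ⟨by linarith [(hb v ω).2], by linarith [(hb v ω).1]⟩
        · rw [integral_neg]
          linarith [hmean v (Finset.mem_range.1 hv)]
    _ = Real.exp (n * l ^ 2 - l * B) := by
        rw [Finset.prod_const, ← Real.exp_nat_mul, ← Real.exp_add, Finset.card_range]
        ring_nf

lemma my_indep_event (Z0 Z1 : ℕ → Ω → ℝ) [IsProbabilityMeasure P]
    (hmeas0 : ∀ t, Measurable (Z0 t)) (hmeas1 : ∀ t, Measurable (Z1 t))
    (hindep : iIndepFun
      (fun p : Bool × ℕ => fun ω => if p.1 then Z1 p.2 ω else Z0 p.2 ω) P)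
    (n c : ℕ) (M : Set (Fin n → ℝ)) (hM : MeasurableSet M) (q : Bool × ℕ)
    (hq : ∀ v : Fin n, q ≠ (true, c + v)) :
    IndepFun (fun ω => Set.indicator M (fun _ => (1:ℝ)) (fun v : Fin n => Z1 (c + v) ω))
      (fun ω => if q.1 then Z1 q.2 ω else Z0 q.2 ω) P := by
  classical
  set f : Bool × ℕ → Ω → ℝ := fun p ω => if p.1 then Z1 p.2 ω else Z0 p.2 ω with hf
  have hfm : ∀ p, Measurable (f p) := by
    rintro ⟨b, t⟩
    by_cases hb : b <;> simp [hf, hb, hmeas0 t, hmeas1 t]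
  set S : Finset (Bool × ℕ) := (Finset.range n).image (fun v => (true, c + v)) with hS
  have hmemS : ∀ v : Fin n, (true, c + (v : ℕ)) ∈ S := by
    intro v
    exact Finset.mem_image.2 ⟨v, Finset.mem_range.2 v.2, rfl⟩
  have hdisj : Disjoint S ({q} : Finset (Bool × ℕ)) := by
    rw [Finset.disjoint_singleton_right]
    intro hqS
    obtain ⟨v, hv, hveq⟩ := Finset.mem_image.1 hqS
    exact hq ⟨v, Finset.mem_range.1 hv⟩ hveq.symm
  have h1 := hindep.indepFun_finset S {q} hdisj hfm
  set φ : (∀ _ : (S : Finset (Bool × ℕ)), ℝ) → (Fin n → ℝ) :=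
    fun x v => x ⟨(true, c + v), hmemS v⟩ with hφ
  have hφm : Measurable φ := measurable_pi_lambda _ (fun v => measurable_pi_apply _)
  set ψ : (∀ _ : ({q} : Finset (Bool × ℕ)), ℝ) → ℝ :=
    fun x => x ⟨q, Finset.mem_singleton_self q⟩ with hψ
  have hψm : Measurable ψ := measurable_pi_apply _
  have hgm : Measurable (Set.indicator M (fun _ => (1:ℝ)) ∘ φ) :=
    (measurable_const.indicator hM).comp hφm
  have h2 := h1.comp hgm hψm
  exact h2

section BE
variable {Z1 Z0 : ℕ → Ω → ℝ} {B : ℝ} {E i : ℕ}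

lemma beS_le (hE : 1 ≤ E) (ω : Ω) : beS Z1 B E i ω ≤ E - 1 := by
  unfold beS
  split <;> simp

lemma le_beS_iff {s : ℕ} (hs : s ≤ E - 1) (ω : Ω) :
    s ≤ beS Z1 B E i ω ↔
      ∀ u < s, -B < ∑ v ∈ Finset.range (u + 1), Z1 (i * E + 1 + v) ω := by
  unfold beS
  split
  · rename_i h
    rw [le_min_iff, and_iff_left hs, Nat.le_find_iff]
    simp only [not_le]
  · rename_i h
    push_neg at h
    simp only [hs, true_iff]
    intro u _
    exact h u

lemma measurableSet_A (hmeas1 : ∀ t, Measurable (Z1 t)) {s : ℕ} (hs : s ≤ E - 1) :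
    MeasurableSet {ω | s ≤ beS Z1 B E i ω} := by
  have : {ω | s ≤ beS Z1 B E i ω} =
      ⋂ (u : ℕ), ⋂ (_ : u < s),
        (fun ω => ∑ v ∈ Finset.range (u + 1), Z1 (i * E + 1 + v) ω) ⁻¹' Set.Ioi (-B) := by
    ext ω
    simp only [Set.mem_setOf_eq, le_beS_iff hs, Set.mem_iInter, Set.mem_preimage,
      Set.mem_Ioi]
  rw [this]
  exact MeasurableSet.iInter fun u => MeasurableSet.iInter fun _ =>
    (Finset.measurable_sum _ fun v _ => hmeas1 _) measurableSet_Ioi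

lemma epoch_sum_ge (hE : 1 ≤ E) (hB : 0 ≤ B)
    (hmem1 : ∀ t ω, Z1 t ω ∈ Set.Icc (-1:ℝ) 1) (ω : Ω) :
    -(B + 1) ≤ ∑ s ∈ Finset.range E,
      (if s ≤ beS Z1 B E i ω then Z1 (i * E + 1 + s) ω else 0) := by
  set N := beS Z1 B E i ω with hN
  have hNE : N ≤ E - 1 := beS_le hE ω
  have hNE' : N < E := lt_of_le_of_lt hNE (Nat.sub_lt hE zero_lt_one)
  have hsum : ∑ s ∈ Finset.range E, (if s ≤ N then Z1 (i * E + 1 + s) ω else 0)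
      = ∑ s ∈ Finset.range (N + 1), Z1 (i * E + 1 + s) ω := by
    rw [← Finset.sum_filter]
    congr 1
    ext s
    simp only [Finset.mem_filter, Finset.mem_range]
    omega
  rw [hsum]
  -- now show the partial sum at N is ≥ -(B+1)
  have key : ∀ M : ℕ, (∀ u < M, -B < ∑ v ∈ Finset.range (u + 1), Z1 (i * E + 1 + v) ω) →
      -(B + 1) ≤ ∑ v ∈ Finset.range (M + 1), Z1 (i * E + 1 + v) ω := by
    intro M hM
    rcases Nat.eq_zero_or_pos M with hM0 | hM0
    · subst hM0
      rw [zero_add, Finset.sum_range_one]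
      have := (hmem1 (i * E + 1 + 0) ω).1
      linarith
    · obtain ⟨M', rfl⟩ : ∃ M', M = M' + 1 := ⟨M - 1, by omega⟩
      rw [Finset.sum_range_succ]
      have h1 := hM M' (by omega)
      have h2 := (hmem1 (i * E + 1 + (M' + 1)) ω).1
      linarith
  refine key N ?_
  intro u hu
  exact (le_beS_iff hNE ω).1 le_rfl u hu

end BE

section Round
variable {Z0 Z1 : ℕ → Ω → ℝ} {B : ℝ} {E : ℕ}

lemma round_integral [IsProbabilityMeasure P] (hE : 1 ≤ E)
    (hmeas0 : ∀ t, Measurable (Z0 t)) (hmeas1 : ∀ t, Measurable (Z1 t))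
    (hmem0 : ∀ t ω, Z0 t ω ∈ Set.Icc (-1:ℝ) 1) (hmem1 : ∀ t ω, Z1 t ω ∈ Set.Icc (-1:ℝ) 1)
    (hindep : iIndepFun
      (fun p : Bool × ℕ => fun ω => if p.1 then Z1 p.2 ω else Z0 p.2 ω) P)
    (i s : ℕ) (hs : s < E) (hmean0 : ∫ ω, Z0 (i * E + 1 + s) ω ∂P = 0) :
    ∫ ω, beReward Z0 Z1 B E (i * E + 1 + s) ω ∂P
      = (P {ω | s ≤ beS Z1 B E i ω}).toReal * ∫ ω, Z1 (i * E + 1 + s) ω ∂P := by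
  classical
  set t := i * E + 1 + s with ht
  set M : Set (Fin s → ℝ) :=
    {x | ∀ u, u < s → -B < ∑ v ∈ Finset.range (u + 1),
      (if h : v < s then x ⟨v, h⟩ else 0)} with hMdef
  have hM : MeasurableSet M := by
    have : M = ⋂ (u : ℕ), ⋂ (_ : u < s),
        (fun x : Fin s → ℝ => ∑ v ∈ Finset.range (u + 1),
          (if h : v < s then x ⟨v, h⟩ else 0)) ⁻¹' Set.Ioi (-B) := by
      ext x
      simp only [hMdef, Set.mem_setOf_eq, Set.mem_iInter, Set.mem_preimage, Set.mem_Ioi]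
    rw [this]
    refine MeasurableSet.iInter fun u => MeasurableSet.iInter fun _ => ?_
    refine (Finset.measurable_sum _ fun v _ => ?_) measurableSet_Ioi
    by_cases h : v < s <;> simp [h]
    exact measurable_pi_apply _
  set tup : Ω → (Fin s → ℝ) := fun ω v => Z1 (i * E + 1 + (v : ℕ)) ω with htup
  have hsE1 : s ≤ E - 1 := Nat.le_sub_one_of_lt hs
  have hmemM : ∀ ω, tup ω ∈ M ↔ s ≤ beS Z1 B E i ω := by
    intro ω
    rw [le_beS_iff hsE1]
    constructor
    · intro hx u hu
      have := hx u hu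
      rwa [Finset.sum_congr rfl (fun v hv => ?_)] at this
      have hvs : v < s := lt_of_lt_of_le (Finset.mem_range.1 hv) hu
      simp [htup, hvs]
    · intro hx u hu
      have := hx u hu
      rw [Finset.sum_congr rfl (fun v hv => ?_)]
      · exact this
      have hvs : v < s := lt_of_lt_of_le (Finset.mem_range.1 hv) hu
      simp [htup, hvs]
  set X : Ω → ℝ := fun ω => M.indicator (fun _ => (1:ℝ)) (tup ω) with hXdef
  have hXeq : ∀ ω, X ω = if s ≤ beS Z1 B E i ω then 1 else 0 := by
    intro ω
    by_cases hb : s ≤ beS Z1 B E i ω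
    · simp [hXdef, Set.indicator_of_mem, (hmemM ω).2 hb, hb]
    · have : tup ω ∉ M := fun hc => hb ((hmemM ω).1 hc)
      simp [hXdef, Set.indicator_of_notMem, this, hb]
  have hXm : Measurable X :=
    (measurable_const.indicator hM).comp (measurable_pi_lambda _ fun v => hmeas1 _)
  have hXb : ∀ ω, |X ω| ≤ 1 := by
    intro ω; rw [hXeq ω]; split <;> simp
  have harm : ∀ ω, beArm Z1 B E t ω = decide (s ≤ beS Z1 B E i ω) := by
    intro ω
    have h1 : t - 1 = i * E + s := by omega
    have hmod : (i * E + s) % E = s := by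
      rw [mul_comm, Nat.mul_add_mod]; exact Nat.mod_eq_of_lt hs
    have hdiv : (i * E + s) / E = i := by
      rw [mul_comm, Nat.mul_add_div (by omega)]
      simp [Nat.div_eq_of_lt hs]
    rw [beArm, h1, hmod, hdiv]
  have hrw : ∀ ω, beReward Z0 Z1 B E t ω = X ω * Z1 t ω + (1 - X ω) * Z0 t ω := by
    intro ω
    rw [beReward, harm ω, hXeq ω]
    by_cases hb : s ≤ beS Z1 B E i ω <;> simp [hb]
  -- independence
  have hq1 : ∀ v : Fin s, ((true, t) : Bool × ℕ) ≠ (true, i * E + 1 + (v : ℕ)) := by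
    intro v
    simp only [ne_eq, Prod.mk.injEq, true_and]
    omega
  have hq0 : ∀ v : Fin s, ((false, t) : Bool × ℕ) ≠ (true, i * E + 1 + (v : ℕ)) := by
    intro v; simp
  have hind1 : IndepFun X (Z1 t) P := by
    have := my_indep_event Z0 Z1 hmeas0 hmeas1 hindep s (i * E + 1) M hM (true, t) hq1
    exact this
  have hind0 : IndepFun X (Z0 t) P := by
    have := my_indep_event Z0 Z1 hmeas0 hmeas1 hindep s (i * E + 1) M hM (false, t) hq0
    exact this
  have hind0' : IndepFun (fun ω => 1 - X ω) (Z0 t) P := by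
    exact hind0.comp (show Measurable (fun y : ℝ => 1 - y) from
      measurable_const.sub measurable_id) measurable_id
  -- integrability
  have hiX : Integrable X P := my_integrable hXm hXb
  have hi1 : Integrable (Z1 t) P :=
    my_integrable (hmeas1 t) (C := 1) (fun ω => abs_le.2 ⟨(hmem1 t ω).1, (hmem1 t ω).2⟩)
  have hi0 : Integrable (Z0 t) P :=
    my_integrable (hmeas0 t) (C := 1) (fun ω => abs_le.2 ⟨(hmem0 t ω).1, (hmem0 t ω).2⟩)
  have hi1X : Integrable (fun ω => 1 - X ω) P := (integrable_const 1).sub hiX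
  have hA : MeasurableSet {ω | s ≤ beS Z1 B E i ω} := measurableSet_A hmeas1 hsE1
  have hXint : ∫ ω, X ω ∂P = (P {ω | s ≤ beS Z1 B E i ω}).toReal := by
    have e : X = Set.indicator {ω | s ≤ beS Z1 B E i ω} (fun _ => (1:ℝ)) := by
      funext ω
      rw [hXeq ω]
      by_cases hb : s ≤ beS Z1 B E i ω <;> simp [hb]
    rw [e, integral_indicator_const (1:ℝ) hA, smul_eq_mul, mul_one]; rfl
  calc ∫ ω, beReward Z0 Z1 B E t ω ∂P
      = ∫ ω, (X ω * Z1 t ω + (1 - X ω) * Z0 t ω) ∂P := by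
        exact integral_congr_ae (Filter.Eventually.of_forall hrw)
    _ = (∫ ω, X ω * Z1 t ω ∂P) + ∫ ω, (1 - X ω) * Z0 t ω ∂P := by
        exact integral_add (hind1.integrable_mul hiX hi1) (hind0'.integrable_mul hi1X hi0)
    _ = (P {ω | s ≤ beS Z1 B E i ω}).toReal * ∫ ω, Z1 t ω ∂P := by
        have e1 : ∫ ω, X ω * Z1 t ω ∂P = (∫ ω, X ω ∂P) * ∫ ω, Z1 t ω ∂P := by
          simpa [Pi.mul_apply] using hind1.integral_mul_eq_mul_integral hiX.aestronglyMeasurable hi1.aestronglyMeasurable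
        have e2 : ∫ ω, (1 - X ω) * Z0 t ω ∂P
            = (∫ ω, (1 - X ω) ∂P) * ∫ ω, Z0 t ω ∂P := by
          simpa [Pi.mul_apply] using hind0'.integral_mul_eq_mul_integral hi1X.aestronglyMeasurable hi0.aestronglyMeasurable
        rw [e1, e2, hXint, hmean0]
        ring
end Round

section Round2
variable {Z0 Z1 : ℕ → Ω → ℝ} {B : ℝ} {E : ℕ}

lemma round_integral_ite [IsProbabilityMeasure P] (hE : 1 ≤ E)
    (hmeas0 : ∀ t, Measurable (Z0 t)) (hmeas1 : ∀ t, Measurable (Z1 t))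
    (hmem1 : ∀ t ω, Z1 t ω ∈ Set.Icc (-1:ℝ) 1)
    (hindep : iIndepFun
      (fun p : Bool × ℕ => fun ω => if p.1 then Z1 p.2 ω else Z0 p.2 ω) P)
    (i s : ℕ) (hs : s < E) :
    ∫ ω, (if s ≤ beS Z1 B E i ω then Z1 (i * E + 1 + s) ω else 0) ∂P
      = (P {ω | s ≤ beS Z1 B E i ω}).toReal * ∫ ω, Z1 (i * E + 1 + s) ω ∂P := by
  classical
  set t := i * E + 1 + s with ht
  set M : Set (Fin s → ℝ) :=
    {x | ∀ u, u < s → -B < ∑ v ∈ Finset.range (u + 1),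
      (if h : v < s then x ⟨v, h⟩ else 0)} with hMdef
  have hM : MeasurableSet M := by
    have : M = ⋂ (u : ℕ), ⋂ (_ : u < s),
        (fun x : Fin s → ℝ => ∑ v ∈ Finset.range (u + 1),
          (if h : v < s then x ⟨v, h⟩ else 0)) ⁻¹' Set.Ioi (-B) := by
      ext x
      simp only [hMdef, Set.mem_setOf_eq, Set.mem_iInter, Set.mem_preimage, Set.mem_Ioi]
    rw [this]
    refine MeasurableSet.iInter fun u => MeasurableSet.iInter fun _ => ?_
    refine (Finset.measurable_sum _ fun v _ => ?_) measurableSet_Ioi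
    by_cases h : v < s <;> simp [h]
    exact measurable_pi_apply _
  set tup : Ω → (Fin s → ℝ) := fun ω v => Z1 (i * E + 1 + (v : ℕ)) ω with htup
  have hsE1 : s ≤ E - 1 := Nat.le_sub_one_of_lt hs
  have hmemM : ∀ ω, tup ω ∈ M ↔ s ≤ beS Z1 B E i ω := by
    intro ω
    rw [le_beS_iff hsE1]
    constructor
    · intro hx u hu
      have := hx u hu
      rwa [Finset.sum_congr rfl (fun v hv => ?_)] at this
      have hvs : v < s := lt_of_lt_of_le (Finset.mem_range.1 hv) hu
      simp [htup, hvs]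
    · intro hx u hu
      have := hx u hu
      rw [Finset.sum_congr rfl (fun v hv => ?_)]
      · exact this
      have hvs : v < s := lt_of_lt_of_le (Finset.mem_range.1 hv) hu
      simp [htup, hvs]
  set X : Ω → ℝ := fun ω => M.indicator (fun _ => (1:ℝ)) (tup ω) with hXdef
  have hXeq : ∀ ω, X ω = if s ≤ beS Z1 B E i ω then 1 else 0 := by
    intro ω
    by_cases hb : s ≤ beS Z1 B E i ω
    · simp [hXdef, Set.indicator_of_mem, (hmemM ω).2 hb, hb]
    · have : tup ω ∉ M := fun hc => hb ((hmemM ω).1 hc)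
      simp [hXdef, Set.indicator_of_notMem, this, hb]
  have hXm : Measurable X :=
    (measurable_const.indicator hM).comp (measurable_pi_lambda _ fun v => hmeas1 _)
  have hXb : ∀ ω, |X ω| ≤ 1 := by
    intro ω; rw [hXeq ω]; split <;> simp
  have hq1 : ∀ v : Fin s, ((true, t) : Bool × ℕ) ≠ (true, i * E + 1 + (v : ℕ)) := by
    intro v
    simp only [ne_eq, Prod.mk.injEq, true_and]
    omega
  have hind1 : IndepFun X (Z1 t) P :=
    my_indep_event Z0 Z1 hmeas0 hmeas1 hindep s (i * E + 1) M hM (true, t) hq1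
  have hiX : Integrable X P := my_integrable hXm hXb
  have hi1 : Integrable (Z1 t) P :=
    my_integrable (hmeas1 t) (C := 1) (fun ω => abs_le.2 ⟨(hmem1 t ω).1, (hmem1 t ω).2⟩)
  have hA : MeasurableSet {ω | s ≤ beS Z1 B E i ω} := measurableSet_A hmeas1 hsE1
  have hXint : ∫ ω, X ω ∂P = (P {ω | s ≤ beS Z1 B E i ω}).toReal := by
    have e : X = Set.indicator {ω | s ≤ beS Z1 B E i ω} (fun _ => (1:ℝ)) := by
      funext ω
      rw [hXeq ω]
      by_cases hb : s ≤ beS Z1 B E i ω <;> simp [hb]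
    rw [e, integral_indicator_const (1:ℝ) hA, smul_eq_mul, mul_one]; rfl
  have hrw : ∀ ω, (if s ≤ beS Z1 B E i ω then Z1 t ω else 0) = X ω * Z1 t ω := by
    intro ω
    rw [hXeq ω]
    by_cases hb : s ≤ beS Z1 B E i ω <;> simp [hb]
  calc ∫ ω, (if s ≤ beS Z1 B E i ω then Z1 t ω else 0) ∂P
      = ∫ ω, X ω * Z1 t ω ∂P := integral_congr_ae (Filter.Eventually.of_forall hrw)
    _ = (P {ω | s ≤ beS Z1 B E i ω}).toReal * ∫ ω, Z1 t ω ∂P := by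
        rw [← hXint]
        simpa [Pi.mul_apply] using hind1.integral_mul_eq_mul_integral hiX.aestronglyMeasurable hi1.aestronglyMeasurable

lemma tail_bound [IsProbabilityMeasure P] (hE : 1 ≤ E)
    (hmeas0 : ∀ t, Measurable (Z0 t)) (hmeas1 : ∀ t, Measurable (Z1 t))
    (hmem1 : ∀ t ω, Z1 t ω ∈ Set.Icc (-1:ℝ) 1)
    (hindep : iIndepFun
      (fun p : Bool × ℕ => fun ω => if p.1 then Z1 p.2 ω else Z0 p.2 ω) P)
    (i s : ℕ) (hs : s < E)
    (hpos : ∀ v < E, 0 ≤ ∫ ω, Z1 (i * E + 1 + v) ω ∂P)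
    {l : ℝ} (h0 : 0 ≤ l) (h1 : l ≤ 1) :
    1 - (P {ω | s ≤ beS Z1 B E i ω}).toReal ≤ E * Real.exp (E * l ^ 2 - l * B) := by
  classical
  have hsE1 : s ≤ E - 1 := Nat.le_sub_one_of_lt hs
  have hA : MeasurableSet {ω | s ≤ beS Z1 B E i ω} := measurableSet_A hmeas1 hsE1
  have hindZ : iIndepFun
      (fun v ω => Z1 (i * E + 1 + v) ω) P := by
    have hinj : Function.Injective (fun v : ℕ => ((true, i * E + 1 + v) : Bool × ℕ)) := by
      intro a b hab
      simp only [Prod.mk.injEq] at hab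
      omega
    exact my_iIndepFun_precomp hindep _ hinj
  -- individual chernoff bounds
  have hcher : ∀ u < s,
      (P {ω | ∑ v ∈ Finset.range (u + 1), Z1 (i * E + 1 + v) ω ≤ -B}).toReal
        ≤ Real.exp (E * l ^ 2 - l * B) := by
    intro u hu
    have h2 := my_chernoff hindZ (fun v => hmeas1 _) (fun v ω => hmem1 _ ω) (u + 1)
      (fun v hv => hpos v (by omega)) (B := B) h0 h1
    refine h2.trans (Real.exp_le_exp.2 ?_)
    have : ((u:ℝ) + 1) ≤ E := by
      have : (u + 1 : ℕ) ≤ E := by omega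
      exact_mod_cast this
    push_cast
    nlinarith [sq_nonneg l]
  -- complement as union
  have hcompl : {ω | s ≤ beS Z1 B E i ω}ᶜ ⊆
      ⋃ u ∈ Finset.range s, {ω | ∑ v ∈ Finset.range (u + 1), Z1 (i * E + 1 + v) ω ≤ -B} := by
    intro ω hω
    simp only [Set.mem_compl_iff, Set.mem_setOf_eq, le_beS_iff hsE1, not_forall, not_lt] at hω
    obtain ⟨u, hu, hle⟩ := hω
    exact Set.mem_biUnion (Finset.mem_range.2 hu) hle
  have hsub : P {ω | s ≤ beS Z1 B E i ω}ᶜ ≤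
      ∑ u ∈ Finset.range s, P {ω | ∑ v ∈ Finset.range (u + 1), Z1 (i * E + 1 + v) ω ≤ -B} :=
    le_trans (measure_mono hcompl) (measure_biUnion_finset_le _ _)
  have h1c : 1 - (P {ω | s ≤ beS Z1 B E i ω}).toReal
      = (P {ω | s ≤ beS Z1 B E i ω}ᶜ).toReal := by
    rw [prob_compl_eq_one_sub hA, ENNReal.toReal_sub_of_le prob_le_one (by simp)]
    simp
  rw [h1c]
  calc (P {ω | s ≤ beS Z1 B E i ω}ᶜ).toReal
      ≤ (∑ u ∈ Finset.range s,
          P {ω | ∑ v ∈ Finset.range (u + 1), Z1 (i * E + 1 + v) ω ≤ -B}).toReal := by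
        refine ENNReal.toReal_mono ?_ hsub
        exact (ENNReal.sum_lt_top.2 (fun u _ => measure_lt_top _ _)).ne
    _ = ∑ u ∈ Finset.range s,
          (P {ω | ∑ v ∈ Finset.range (u + 1), Z1 (i * E + 1 + v) ω ≤ -B}).toReal := by
        rw [ENNReal.toReal_sum (fun u _ => measure_ne_top _ _)]
    _ ≤ ∑ u ∈ Finset.range s, Real.exp (E * l ^ 2 - l * B) := by
        refine Finset.sum_le_sum (fun u hu => hcher u (Finset.mem_range.1 hu))
    _ = s * Real.exp (E * l ^ 2 - l * B) := by
        rw [Finset.sum_const, Finset.card_range, nsmul_eq_mul]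
    _ ≤ E * Real.exp (E * l ^ 2 - l * B) := by
        have : (s:ℝ) ≤ E := by exact_mod_cast hs.le
        exact mul_le_mul_of_nonneg_right this (Real.exp_nonneg _)
end Round2

lemma my_numeric (E m T : ℕ) (B : ℝ) (hE : 1 ≤ E) (hm : 1 ≤ m) (hT : T = m * E)
    (hB : 1 ≤ B) (hBlog : 2 * Real.log T ≤ B) (hB2 : 6 * (E:ℝ) * Real.log T ≤ B ^ 2) :
    ∃ l : ℝ, 0 ≤ l ∧ l ≤ 1 ∧ (E:ℝ) ^ 2 * Real.exp ((E:ℝ) * l ^ 2 - l * B) ≤ B + 1 := by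
  have hEpos : (0:ℝ) < E := by exact_mod_cast hE
  have hTEn : E ≤ T := by calc E = 1 * E := (one_mul E).symm
                            _ ≤ m * E := Nat.mul_le_mul_right E hm
                            _ = T := hT.symm
  have hTE : (E:ℝ) ≤ T := by exact_mod_cast hTEn
  have hTpos : (0:ℝ) < T := lt_of_lt_of_le hEpos hTE
  by_cases hc : B ≤ 2 * E
  · refine ⟨B / (2 * E), by positivity, ?_, ?_⟩
    · rw [div_le_one (by positivity)]; linarith
    · have hexp : (E:ℝ) * (B / (2 * E)) ^ 2 - (B / (2 * E)) * B = -(B ^ 2 / (4 * E)) := by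
        field_simp
        ring
      rw [hexp]
      rcases eq_or_lt_of_le (show (1:ℝ) ≤ E by exact_mod_cast hE) with hE1 | hE2
      · rw [← hE1]
        have : Real.exp (-(B ^ 2 / (4 * 1))) ≤ 1 := by
          rw [Real.exp_le_one_iff]
          nlinarith
        nlinarith
      · have hE2' : (2:ℝ) ≤ E := by
          have : 2 ≤ E := by
            by_contra hcon
            push_neg at hcon
            interval_cases E <;> simp_all
          exact_mod_cast this
        have hT2 : (2:ℝ) ≤ T := le_trans hE2' hTE
        have hlog2 : Real.log 2 ≤ Real.log T := Real.log_le_log (by norm_num) hT2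
        have hl2 : (2/3 : ℝ) < Real.log 2 := by
          have := Real.log_two_gt_d9; linarith
        have hlogT : (2/3 : ℝ) ≤ Real.log T := by linarith
        have hB4 : 4 * (E:ℝ) ≤ B ^ 2 := by nlinarith
        have hBsq : 2 * Real.sqrt E ≤ B := by
          have h1 : Real.sqrt (4 * E) ≤ Real.sqrt (B ^ 2) := Real.sqrt_le_sqrt hB4
          rw [Real.sqrt_sq (by linarith : (0:ℝ) ≤ B)] at h1
          have h4 : Real.sqrt (4 * E) = 2 * Real.sqrt E := by
            rw [show (4:ℝ) * E = 2 ^ 2 * E by ring, Real.sqrt_mul (by positivity),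
              Real.sqrt_sq (by norm_num)]
          linarith [h4 ▸ h1]
        have hexple : Real.exp (-(B ^ 2 / (4 * E))) ≤ Real.exp (-(3 / 2 * Real.log T)) := by
          rw [Real.exp_le_exp, neg_le_neg_iff]
          have h5 : 3 / 2 * Real.log T = (6 * E * Real.log T) / (4 * E) := by
            field_simp; ring
          rw [h5]
          exact (div_le_div_iff_of_pos_right (by positivity)).2 hB2
        have hexpval : Real.exp (-(3 / 2 * Real.log T)) = 1 / ((T:ℝ) * Real.sqrt T) := by
          rw [Real.exp_neg, show (3/2:ℝ) * Real.log T = Real.log T + Real.log T / 2 by ring,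
            Real.exp_add, Real.exp_log hTpos, Real.exp_half, Real.exp_log hTpos, one_div]
        have hsE : Real.sqrt (E:ℝ) * Real.sqrt (E:ℝ) = E := Real.mul_self_sqrt (by positivity)
        have h3 : (E:ℝ) * Real.sqrt E ≤ T * Real.sqrt T :=
          mul_le_mul hTE (Real.sqrt_le_sqrt hTE) (Real.sqrt_nonneg _) (by positivity)
        have h4 : 2 * Real.sqrt E * ((E:ℝ) * Real.sqrt E) ≤ B * ((T:ℝ) * Real.sqrt T) :=
          mul_le_mul hBsq h3 (by positivity) (by linarith)
        calc (E:ℝ) ^ 2 * Real.exp (-(B ^ 2 / (4 * E)))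
            ≤ (E:ℝ) ^ 2 * (1 / ((T:ℝ) * Real.sqrt T)) := by
              rw [← hexpval]
              exact mul_le_mul_of_nonneg_left hexple (by positivity)
          _ ≤ B + 1 := by
              rw [mul_one_div, div_le_iff₀ (by positivity)]
              nlinarith [h4, hsE, Real.sqrt_nonneg (T:ℝ), Real.sqrt_nonneg (E:ℝ), hTpos,
                mul_pos hTpos (Real.sqrt_pos.2 hTpos)]
  · push_neg at hc
    refine ⟨1, zero_le_one, le_rfl, ?_⟩
    have he : (E:ℝ) * 1 ^ 2 - 1 * B = E - B := by ring
    rw [he]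
    have h1 : Real.exp ((E:ℝ) - B) ≤ Real.exp (-(B / 2)) := Real.exp_le_exp.2 (by linarith)
    have h2 : Real.exp (-(B / 2)) ≤ Real.exp (-Real.log T) := Real.exp_le_exp.2 (by linarith)
    have h3 : Real.exp (-Real.log T) = 1 / T := by
      rw [Real.exp_neg, Real.exp_log hTpos, one_div]
    have h5 : (E:ℝ) ^ 2 * (1 / T) ≤ E := by
      rw [mul_one_div, div_le_iff₀ hTpos]
      nlinarith
    calc (E:ℝ) ^ 2 * Real.exp ((E:ℝ) - B) ≤ (E:ℝ) ^ 2 * (1 / (T:ℝ)) := by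
          refine mul_le_mul_of_nonneg_left ?_ (by positivity)
          rw [← h3]; linarith
      _ ≤ (E:ℝ) := h5
      _ ≤ B + 1 := by linarith

lemma my_lip {μ μ' : ℝ → ℝ} {L : ℝ}
    (hderiv : ∀ x ∈ Set.Icc (0:ℝ) 1, HasDerivWithinAt μ (μ' x) (Set.Icc (0:ℝ) 1) x)
    (hbound : ∀ x ∈ Set.Icc (0:ℝ) 1, |μ' x| ≤ L)
    {x y : ℝ} (hx : x ∈ Set.Icc (0:ℝ) 1) (hy : y ∈ Set.Icc (0:ℝ) 1) :
    |μ y - μ x| ≤ L * |y - x| :=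
  (convex_Icc (0:ℝ) 1).norm_image_sub_le_of_norm_hasDerivWithin_le hderiv hbound hx hy

lemma my_mono {μ μ' : ℝ → ℝ}
    (hderiv : ∀ x ∈ Set.Icc (0:ℝ) 1, HasDerivWithinAt μ (μ' x) (Set.Icc (0:ℝ) 1) x)
    (hne : ∀ x ∈ Set.Icc (0:ℝ) 1, μ' x ≠ 0) :
    (∀ x ∈ Set.Icc (0:ℝ) 1, ∀ y ∈ Set.Icc (0:ℝ) 1, x ≤ y → μ x ≤ μ y) ∨
    (∀ x ∈ Set.Icc (0:ℝ) 1, ∀ y ∈ Set.Icc (0:ℝ) 1, x ≤ y → μ y ≤ μ x) := by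
  rcases hasDerivWithinAt_forall_lt_or_forall_gt_of_forall_ne (convex_Icc 0 1) hderiv
    (m := 0) hne with hneg | hpos
  · right
    have := strictAntiOn_of_hasDerivWithinAt_neg (convex_Icc (0:ℝ) 1)
      (fun x hx => (hderiv x hx).continuousWithinAt)
      (fun x hx => (hderiv x (interior_subset hx)).mono interior_subset)
      (fun x hx => hneg x (interior_subset hx))
    intro x hx y hy hxy
    rcases eq_or_lt_of_le hxy with rfl | hlt
    · exact le_refl _
    · exact (this hx hy hlt).le
  · left
    have := strictMonoOn_of_hasDerivWithinAt_pos (convex_Icc (0:ℝ) 1)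
      (fun x hx => (hderiv x hx).continuousWithinAt)
      (fun x hx => (hderiv x (interior_subset hx)).mono interior_subset)
      (fun x hx => hpos x (interior_subset hx))
    intro x hx y hy hxy
    rcases eq_or_lt_of_le hxy with rfl | hlt
    · exact le_refl _
    · exact (this hx hy hlt).le

lemma sum_range_mul (g : ℕ → ℝ) (m E : ℕ) :
    ∑ k ∈ Finset.range (m * E), g k = ∑ i ∈ Finset.range m, ∑ s ∈ Finset.range E, g (i * E + s) := by
  induction m with
  | zero => simp
  | succ n ih =>
    have h1 : (n + 1) * E = n * E + E := by ring
    rw [h1, Finset.sum_range_succ, ← ih]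
    rw [Finset.range_eq_Ico, ← Finset.sum_Ico_consecutive g (by omega : 0 ≤ n * E)
      (by omega : n * E ≤ n * E + E)]
    congr 1
    · rw [Finset.range_eq_Ico]
    rw [Finset.sum_Ico_eq_sum_range]
    simp only [Nat.add_sub_cancel_left]

end MyAux

/-- **Corner case: no stationary point (Lemma 8).**
One-armed setting over horizon `T = m·E`, `Δ = 1/m`, mean rewards `r(t) = μ(t/T)`, where
`μ` is differentiable on `[0,1]` with derivative `μ'` satisfying `|μ'| ≤ L` and `μ' ≠ 0`
everywhere on `[0,1]`.  If `B² ≥ 6ΔT log T` and `B ≥ 2 log T`, then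
`Reg(BE(B,Δ), μ) ≤ LΔ²T + (B+1)Δ⁻¹`. -/
theorem be_regret_corner_case
    {Ω : Type*} [MeasurableSpace Ω] (P : Measure Ω) [IsProbabilityMeasure P]
    (T E m : ℕ) (B Δ L : ℝ) (μ μ' : ℝ → ℝ) (Z0 Z1 : ℕ → Ω → ℝ)
    (hE : 1 ≤ E) (hm : 1 ≤ m) (hT : T = m * E)
    (hΔ : Δ = (m : ℝ)⁻¹)
    (hB : 1 ≤ B)
    (hBlog : 2 * Real.log T ≤ B)
    (hB2 : 6 * Δ * T * Real.log T ≤ B ^ 2)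
    (hL : 0 < L)
    (hderiv : ∀ x ∈ Set.Icc (0:ℝ) 1, HasDerivWithinAt μ (μ' x) (Set.Icc (0:ℝ) 1) x)
    (hbound : ∀ x ∈ Set.Icc (0:ℝ) 1, |μ' x| ≤ L)
    (hne : ∀ x ∈ Set.Icc (0:ℝ) 1, μ' x ≠ 0)
    (hmeas0 : ∀ t, Measurable (Z0 t)) (hmeas1 : ∀ t, Measurable (Z1 t))
    (hmem0 : ∀ t ω, Z0 t ω ∈ Set.Icc (-1:ℝ) 1) (hmem1 : ∀ t ω, Z1 t ω ∈ Set.Icc (-1:ℝ) 1)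
    (hmean0 : ∀ t, ∫ ω, Z0 t ω ∂P = 0)
    (hmean1 : ∀ t, 1 ≤ t → t ≤ T → ∫ ω, Z1 t ω ∂P = μ ((t : ℝ) / T))
    (hindep : ProbabilityTheory.iIndepFun
      (fun p : Bool × ℕ => fun ω => if p.1 then Z1 p.2 ω else Z0 p.2 ω) P) :
    beRegret P Z0 Z1 B E T (fun t => μ ((t : ℝ) / T)) ≤
      L * Δ ^ 2 * T + (B + 1) * Δ⁻¹ := by
  classical
  have hEpos : (0:ℝ) < E := by exact_mod_cast hE
  have hmpos : (0:ℝ) < m := by exact_mod_cast hm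
  have hTn : 1 ≤ T := by rw [hT]; exact Nat.one_le_iff_ne_zero.2 (by positivity)
  have hTpos : (0:ℝ) < T := by exact_mod_cast hTn
  have hΔpos : 0 < Δ := by rw [hΔ]; positivity
  have hΔT : Δ * T = E := by
    rw [hΔ, hT]
    push_cast
    field_simp
  have hΔinv : Δ⁻¹ = (m:ℝ) := by rw [hΔ, inv_inv]
  have hB2' : 6 * (E:ℝ) * Real.log T ≤ B ^ 2 := by
    calc 6 * (E:ℝ) * Real.log T = 6 * (Δ * (T:ℝ)) * Real.log T := by rw [hΔT]
      _ = 6 * Δ * T * Real.log T := by ring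
      _ ≤ B ^ 2 := hB2
  obtain ⟨l, hl0, hl1, hlB⟩ := my_numeric E m T B hE hm hT hB hBlog hB2'
  set r : ℕ → ℝ := fun t => μ ((t:ℝ) / T) with hrdef
  have hmemx : ∀ t : ℕ, 1 ≤ t → t ≤ T → ((t:ℝ)/T) ∈ Set.Icc (0:ℝ) 1 := by
    intro t h1 h2
    constructor
    · positivity
    · rw [div_le_one hTpos]; exact_mod_cast h2
  have hrval : ∀ t, 1 ≤ t → t ≤ T → ∫ ω, Z1 t ω ∂P = r t := fun t h1 h2 => hmean1 t h1 h2
  have hrle1 : ∀ t, 1 ≤ t → t ≤ T → r t ≤ 1 := by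
    intro t h1 h2
    rw [← hrval t h1 h2]
    calc ∫ ω, Z1 t ω ∂P ≤ ∫ _, (1:ℝ) ∂P :=
          integral_mono (my_integrable (hmeas1 t) (C := 1)
            (fun ω => abs_le.2 ⟨(hmem1 t ω).1, (hmem1 t ω).2⟩))
            (integrable_const 1) (fun ω => (hmem1 t ω).2)
      _ = 1 := by simp
  have htle : ∀ i s : ℕ, i < m → s < E → 1 ≤ i*E+1+s ∧ i*E+1+s ≤ T := by
    intro i s hi hs
    refine ⟨by omega, ?_⟩
    have h2 : i*E + E ≤ m*E := by
      calc i*E + E = (i+1)*E := by ring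
        _ ≤ m*E := Nat.mul_le_mul_right E (by omega)
    omega
  have hET : (E:ℝ)/T = Δ := by
    rw [← hΔT]
    field_simp
  have hlipr : ∀ t t' : ℕ, 1 ≤ t → t ≤ T → 1 ≤ t' → t' ≤ T → t ≤ t' + E → t' ≤ t + E →
      r t ≤ r t' + L * Δ := by
    intro t t' h1 h2 h3 h4 h5 h6
    have hx := hmemx t' h3 h4
    have hy := hmemx t h1 h2
    have hlip := my_lip hderiv hbound hx hy
    have c5 : (t:ℝ) ≤ (t':ℝ) + E := by exact_mod_cast h5
    have c6 : (t':ℝ) ≤ (t:ℝ) + E := by exact_mod_cast h6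
    have h9 : |(t:ℝ) - (t':ℝ)| ≤ (E:ℝ) := abs_le.2 ⟨by linarith, by linarith⟩
    have hd : |(t:ℝ)/T - (t':ℝ)/T| ≤ (E:ℝ)/T := by
      rw [div_sub_div_same, abs_div, abs_of_pos hTpos]
      gcongr
    have h10 : |r t - r t'| ≤ L * ((E:ℝ)/T) := by
      refine hlip.trans ?_
      exact mul_le_mul_of_nonneg_left hd hL.le
    have := (abs_le.1 h10).2
    rw [hET] at this
    linarith
  set p : ℕ → ℕ → ℝ := fun i s => (P {ω | s ≤ beS Z1 B E i ω}).toReal with hpdef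
  have hp0 : ∀ i s, 0 ≤ p i s := fun i s => ENNReal.toReal_nonneg
  have hp1 : ∀ i s : ℕ, p i s ≤ 1 := by
    intro i s
    have h := prob_le_one (μ := P) (s := {ω | s ≤ beS Z1 B E i ω})
    have := ENNReal.toReal_mono (by simp) h
    simpa using this
  -- epoch lower bound on played value
  have hepoch_sum : ∀ i, i < m → -(B+1) ≤ ∑ s ∈ Finset.range E, p i s * r (i*E+1+s) := by
    intro i hi
    have heq : ∀ s ∈ Finset.range E, p i s * r (i*E+1+s)
        = ∫ ω, (if s ≤ beS Z1 B E i ω then Z1 (i*E+1+s) ω else 0) ∂P := by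
      intro s hs
      have hsE := Finset.mem_range.1 hs
      obtain ⟨ha, hb'⟩ := htle i s hi hsE
      rw [round_integral_ite hE hmeas0 hmeas1 hmem1 hindep i s hsE, hrval _ ha hb']
    have hint : ∀ s ∈ Finset.range E,
        Integrable (fun ω => if s ≤ beS Z1 B E i ω then Z1 (i*E+1+s) ω else 0) P := by
      intro s hs
      refine my_integrable ?_ (C := 1) ?_
      · exact Measurable.ite (measurableSet_A hmeas1
          (Nat.le_sub_one_of_lt (Finset.mem_range.1 hs))) (hmeas1 _) measurable_const
      · intro ω
        split
        · exact abs_le.2 ⟨(hmem1 _ ω).1, (hmem1 _ ω).2⟩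
        · simp
    rw [Finset.sum_congr rfl heq, ← integral_finset_sum _ hint]
    have hptw := epoch_sum_ge (i := i) (Z1 := Z1) (B := B) hE (by linarith) hmem1
    calc -(B+1) = ∫ _, (-(B+1)) ∂P := by simp
      _ ≤ _ := integral_mono (integrable_const _) (integrable_finset_sum _ hint)
          (fun ω => hptw ω)
  -- regret rewrite
  have hsplitF : ∀ F : ℕ → ℝ, ∑ t ∈ Finset.Icc 1 T, F t
      = ∑ i ∈ Finset.range m, ∑ s ∈ Finset.range E, F (i*E+1+s) := by
    intro F
    rw [show Finset.Icc 1 T = Finset.Ico 1 (T+1) from (Finset.Ico_add_one_right_eq_Icc 1 T),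
      Finset.sum_Ico_eq_sum_range]
    simp only [Nat.add_sub_cancel]
    rw [show T = m * E from hT, sum_range_mul]
    refine Finset.sum_congr rfl fun i hi => Finset.sum_congr rfl fun s hs => ?_
    rw [show 1 + (i*E+s) = i*E+1+s by omega]
  have hregret_eq : beRegret P Z0 Z1 B E T (fun t => μ ((t:ℝ) / T))
      = ∑ i ∈ Finset.range m, ∑ s ∈ Finset.range E,
          (max (r (i*E+1+s)) 0 - p i s * r (i*E+1+s)) := by
    rw [beRegret, hsplitF]
    refine Finset.sum_congr rfl fun i hi => Finset.sum_congr rfl fun s hs => ?_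
    obtain ⟨ha, hb'⟩ := htle i s (Finset.mem_range.1 hi) (Finset.mem_range.1 hs)
    rw [round_integral hE hmeas0 hmeas1 hmem0 hmem1 hindep i s (Finset.mem_range.1 hs)
      (hmean0 _), hrval _ ha hb']
  -- mixed epochs
  set mixed : Finset ℕ := (Finset.range m).filter
    (fun i => (∃ s, s < E ∧ 0 < r (i*E+1+s)) ∧ (∃ s, s < E ∧ r (i*E+1+s) ≤ 0)) with hmixdef
  have hmixcard : mixed.card ≤ 1 := by
    rw [Finset.card_le_one]
    intro a ha b hb
    rw [hmixdef, Finset.mem_filter, Finset.mem_range] at ha hb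
    obtain ⟨ham, ⟨sa, hsa, hsa'⟩, ⟨ua, hua, hua'⟩⟩ := ha
    obtain ⟨hbm, ⟨sb, hsb, hsb'⟩, ⟨ub, hub, hub'⟩⟩ := hb
    by_contra hab
    -- wlog a < b
    rcases my_mono hderiv hne with hmono | hanti
    · -- increasing: positive round in earlier epoch, nonpositive in later: contradiction
      rcases Nat.lt_or_ge a b with hlt | hge
      · -- a < b : r (a*E+1+sa) > 0, r (b*E+1+ub) ≤ 0, a-round < b-round
        have hord : a*E+1+sa ≤ b*E+1+ub := by
          have : a*E + E ≤ b*E := by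
            calc a*E + E = (a+1)*E := by ring
              _ ≤ b*E := Nat.mul_le_mul_right E (by omega)
          omega
        obtain ⟨h1a, h2a⟩ := htle a sa ham hsa
        obtain ⟨h1b, h2b⟩ := htle b ub hbm hub
        have := hmono _ (hmemx _ h1a h2a) _ (hmemx _ h1b h2b)
          (by gcongr)
        simp only [hrdef] at hsa' hub'
        linarith
      · have hlt : b < a := by omega
        have hord : b*E+1+sb ≤ a*E+1+ua := by
          have : b*E + E ≤ a*E := by
            calc b*E + E = (b+1)*E := by ring
              _ ≤ a*E := Nat.mul_le_mul_right E (by omega)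
          omega
        obtain ⟨h1a, h2a⟩ := htle b sb hbm hsb
        obtain ⟨h1b, h2b⟩ := htle a ua ham hua
        have := hmono _ (hmemx _ h1a h2a) _ (hmemx _ h1b h2b)
          (by gcongr)
        simp only [hrdef] at hsb' hua'
        linarith
    · rcases Nat.lt_or_ge a b with hlt | hge
      · have hord : a*E+1+ua ≤ b*E+1+sb := by
          have : a*E + E ≤ b*E := by
            calc a*E + E = (a+1)*E := by ring
              _ ≤ b*E := Nat.mul_le_mul_right E (by omega)
          omega
        obtain ⟨h1a, h2a⟩ := htle a ua ham hua
        obtain ⟨h1b, h2b⟩ := htle b sb hbm hsb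
        have := hanti _ (hmemx _ h1a h2a) _ (hmemx _ h1b h2b)
          (by gcongr)
        simp only [hrdef] at hua' hsb'
        linarith
      · have hlt : b < a := by omega
        have hord : b*E+1+ub ≤ a*E+1+sa := by
          have : b*E + E ≤ a*E := by
            calc b*E + E = (b+1)*E := by ring
              _ ≤ a*E := Nat.mul_le_mul_right E (by omega)
          omega
        obtain ⟨h1a, h2a⟩ := htle b ub hbm hub
        obtain ⟨h1b, h2b⟩ := htle a sa ham hsa
        have := hanti _ (hmemx _ h1a h2a) _ (hmemx _ h1b h2b)
          (by gcongr)
        simp only [hrdef] at hub' hsa'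
        linarith
  -- per-epoch bound
  have hkey : ∀ i ∈ Finset.range m,
      ∑ s ∈ Finset.range E, (max (r (i*E+1+s)) 0 - p i s * r (i*E+1+s))
        ≤ (B+1) + (if i ∈ mixed then L * Δ^2 * T else 0) := by
    intro i hi
    have him := Finset.mem_range.1 hi
    have hLD : 0 ≤ L * Δ^2 * T := by positivity
    by_cases hpose : ∀ s, s < E → 0 < r (i*E+1+s)
    · -- pure positive epoch: use tail bound
      have hb1 : ∑ s ∈ Finset.range E, (max (r (i*E+1+s)) 0 - p i s * r (i*E+1+s))
          ≤ (E:ℝ)^2 * Real.exp ((E:ℝ) * l^2 - l * B) := by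
        have hterm : ∀ s ∈ Finset.range E,
            max (r (i*E+1+s)) 0 - p i s * r (i*E+1+s)
              ≤ (E:ℝ) * Real.exp ((E:ℝ) * l^2 - l * B) := by
          intro s hs
          have hsE := Finset.mem_range.1 hs
          obtain ⟨h1, h2⟩ := htle i s him hsE
          have hrpos := hpose s hsE
          have hmax : max (r (i*E+1+s)) 0 = r (i*E+1+s) := max_eq_left hrpos.le
          rw [hmax]
          have htail := tail_bound (Z0 := Z0) (B := B) hE hmeas0 hmeas1 hmem1 hindep i s hsE
            (fun v hv => by
              obtain ⟨h1v, h2v⟩ := htle i v him hv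
              rw [hrval _ h1v h2v]
              exact (hpose v hv).le) hl0 hl1
          have hr1 := hrle1 _ h1 h2
          have hps := hp1 i s
          have hps0 := hp0 i s
          calc r (i*E+1+s) - p i s * r (i*E+1+s) = (1 - p i s) * r (i*E+1+s) := by ring
            _ ≤ (1 - p i s) * 1 := by
                refine mul_le_mul_of_nonneg_left hr1 (by linarith)
            _ = 1 - p i s := mul_one _
            _ ≤ (E:ℝ) * Real.exp ((E:ℝ) * l^2 - l * B) := htail
        calc ∑ s ∈ Finset.range E, (max (r (i*E+1+s)) 0 - p i s * r (i*E+1+s))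
            ≤ ∑ _s ∈ Finset.range E, (E:ℝ) * Real.exp ((E:ℝ) * l^2 - l * B) :=
              Finset.sum_le_sum hterm
          _ = (E:ℝ)^2 * Real.exp ((E:ℝ) * l^2 - l * B) := by
              rw [Finset.sum_const, Finset.card_range, nsmul_eq_mul]
              ring
      have : ∑ s ∈ Finset.range E, (max (r (i*E+1+s)) 0 - p i s * r (i*E+1+s)) ≤ B + 1 :=
        hb1.trans hlB
      have hite : (0:ℝ) ≤ if i ∈ mixed then L * Δ^2 * T else 0 := by
        split
        · exact hLD
        · exact le_refl 0
      linarith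
    · -- exists nonpositive round
      push_neg at hpose
      obtain ⟨s₀, hs₀E, hs₀⟩ := hpose
      have hgen : ∑ s ∈ Finset.range E, (max (r (i*E+1+s)) 0 - p i s * r (i*E+1+s))
          ≤ (∑ s ∈ Finset.range E, max (r (i*E+1+s)) 0) + (B+1) := by
        rw [Finset.sum_sub_distrib]
        have := hepoch_sum i him
        linarith
      by_cases hposex : ∃ s, s < E ∧ 0 < r (i*E+1+s)
      · -- mixed epoch
        have himix : i ∈ mixed := by
          rw [hmixdef, Finset.mem_filter]
          exact ⟨hi, hposex, ⟨s₀, hs₀E, hs₀⟩⟩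
        rw [if_pos himix]
        have hmaxb : ∀ s ∈ Finset.range E, max (r (i*E+1+s)) 0 ≤ L * Δ := by
          intro s hs
          have hsE := Finset.mem_range.1 hs
          obtain ⟨h1, h2⟩ := htle i s him hsE
          obtain ⟨h1', h2'⟩ := htle i s₀ him hs₀E
          have hrb : r (i*E+1+s) ≤ L * Δ := by
            have := hlipr (i*E+1+s) (i*E+1+s₀) h1 h2 h1' h2' (by omega) (by omega)
            linarith
          exact max_le hrb (by positivity)
        have hsummax : ∑ s ∈ Finset.range E, max (r (i*E+1+s)) 0 ≤ L * Δ^2 * T := by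
          calc ∑ s ∈ Finset.range E, max (r (i*E+1+s)) 0 ≤ ∑ _s ∈ Finset.range E, L * Δ :=
                Finset.sum_le_sum hmaxb
            _ = (E:ℝ) * (L * Δ) := by
                rw [Finset.sum_const, Finset.card_range, nsmul_eq_mul]
            _ = L * Δ^2 * T := by
                rw [← hΔT]
                ring
        linarith
      · -- all nonpositive
        push_neg at hposex
        have hzero : ∀ s ∈ Finset.range E, max (r (i*E+1+s)) 0 = 0 := by
          intro s hs
          exact max_eq_right (hposex s (Finset.mem_range.1 hs))
        have : ∑ s ∈ Finset.range E, max (r (i*E+1+s)) 0 = 0 :=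
          Finset.sum_eq_zero hzero
        have hite : (0:ℝ) ≤ if i ∈ mixed then L * Δ^2 * T else 0 := by
          split
          · exact hLD
          · exact le_refl 0
        linarith
  -- final assembly
  rw [hregret_eq]
  calc ∑ i ∈ Finset.range m, ∑ s ∈ Finset.range E,
        (max (r (i*E+1+s)) 0 - p i s * r (i*E+1+s))
      ≤ ∑ i ∈ Finset.range m, ((B+1) + (if i ∈ mixed then L * Δ^2 * T else 0)) :=
        Finset.sum_le_sum hkey
    _ = m * (B+1) + ∑ i ∈ Finset.range m, (if i ∈ mixed then L * Δ^2 * T else 0) := by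
        rw [Finset.sum_add_distrib, Finset.sum_const, Finset.card_range, nsmul_eq_mul]
    _ ≤ m * (B+1) + L * Δ^2 * T := by
        have : ∑ i ∈ Finset.range m, (if i ∈ mixed then L * Δ^2 * T else 0)
            = ∑ i ∈ Finset.range m ∩ mixed, L * Δ^2 * T := Finset.sum_ite_mem _ _ _
        rw [this, Finset.sum_const, nsmul_eq_mul]
        have hcard : (Finset.range m ∩ mixed).card ≤ 1 :=
          le_trans (Finset.card_le_card Finset.inter_subset_right) hmixcard
        have : ((Finset.range m ∩ mixed).card : ℝ) ≤ 1 := by exact_mod_cast hcard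
        nlinarith [mul_nonneg (mul_nonneg hL.le (sq_nonneg Δ)) hTpos.le]
    _ ≤ L * Δ^2 * T + (B + 1) * Δ⁻¹ := by
        rw [hΔinv]
        nlinarith [hB, hmpos]
end

section
/- Let w > 0 and let h : [0, w] → ℝ be any base function. For all integers i, j ≥ 0, applying the ν^i-flock transform to the ν^j-flock of h yields the ν^{i+j}-flock of h: F_{ν^i}[F_{ν^j}[h]] = F_{ν^{i+j}}[h] as functions on [0, 2^{i+j}w], where F_{ν^j}[h] : [0, 2^j w] → ℝ is treated as a base function of width 2^j w. In particular F_{ν^i} ∘ F_{ν^j} = F_{ν^j} ∘ F_{ν^i}. -/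
open MeasureTheory

/-- The neutralizing vectors: `ν⁰ = (1)` and `ν^k = ν^{k−1} ⊕ (−ν^{k−1}) ∈ {±1}^{2^k}`,
where `⊕` is concatenation.  `nu k` lists the entries of `ν^k` (0-indexed). -/
def nu : ℕ → List ℝ
  | 0 => [1]
  | k + 1 => nu k ++ (nu k).map (fun x => -x)

/-- The `v`-flock of a base function `h : [0, w] → ℝ`: the function `F_v[h] : ℝ → ℝ` that on
each subinterval `[(i−1)w, iw)` (for `i = 1, …, length v`) equals `v_i · h(x − (i−1)w)`
(weighted copies of `h` placed side by side), and vanishes elsewhere. -/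
noncomputable def flock (w : ℝ) (v : List ℝ) (h : ℝ → ℝ) : ℝ → ℝ := fun x =>
  ∑ i ∈ Finset.range v.length,
    if (i : ℝ) * w ≤ x ∧ x < ((i : ℝ) + 1) * w then v.getD i 0 * h (x - (i : ℝ) * w) else 0

/-- The level-`ℓ` anti-derivative: `Φ⁰[f] = f` and `Φ^ℓ[f](x) = ∫_0^x Φ^{ℓ−1}[f](u) du`. -/
noncomputable def antideriv : ℕ → (ℝ → ℝ) → (ℝ → ℝ)
  | 0, f => f
  | ℓ + 1, f => fun x => ∫ u in (0:ℝ)..x, antideriv ℓ f u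

lemma flock_nil (w : ℝ) (h : ℝ → ℝ) (x : ℝ) : flock w [] h x = 0 := by
  simp [flock]

lemma flock_cons (w c : ℝ) (v : List ℝ) (h : ℝ → ℝ) (x : ℝ) :
    flock w (c :: v) h x =
      (if 0 ≤ x ∧ x < w then c * h x else 0) + flock w v h (x - w) := by
  unfold flock
  rw [List.length_cons, Finset.sum_range_succ', add_comm]
  congr 1
  · norm_num
  · apply Finset.sum_congr rfl
    intro n _
    rw [List.getD_cons_succ]
    have h1 : ((n + 1 : ℕ) : ℝ) * w ≤ x ↔ (n : ℝ) * w ≤ x - w := by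
      push_cast; constructor <;> intro <;> linarith
    have h2 : x < (((n + 1 : ℕ) : ℝ) + 1) * w ↔ x - w < ((n : ℝ) + 1) * w := by
      push_cast; constructor <;> intro <;> linarith
    have h3 : x - ((n + 1 : ℕ) : ℝ) * w = (x - w) - (n : ℝ) * w := by
      push_cast; ring
    rw [if_congr (and_congr h1 h2) (by rw [h3]) rfl]

lemma flock_append (w : ℝ) (v₁ v₂ : List ℝ) (h : ℝ → ℝ) (x : ℝ) :
    flock w (v₁ ++ v₂) h x = flock w v₁ h x + flock w v₂ h (x - (v₁.length : ℝ) * w) := by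
  induction v₁ generalizing x with
  | nil => simp [flock_nil]
  | cons c t ih =>
      rw [List.cons_append, flock_cons, ih, flock_cons, add_assoc,
        show (x - w) - (t.length : ℝ) * w = x - ((c :: t).length : ℝ) * w from by
          rw [List.length_cons]; push_cast; ring]

lemma flock_map_mul (w c : ℝ) (v : List ℝ) (h : ℝ → ℝ) (x : ℝ) :
    flock w (v.map (fun y => c * y)) h x = c * flock w v h x := by
  unfold flock
  rw [List.length_map, Finset.mul_sum]
  apply Finset.sum_congr rfl
  intro n hn
  have hn' : n < v.length := Finset.mem_range.mp hn
  rw [List.getD_eq_getElem _ _ (by simpa using hn'), List.getD_eq_getElem _ _ hn',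
    List.getElem_map]
  split <;> ring

lemma flock_eq_zero (w : ℝ) (hw : 0 ≤ w) (v : List ℝ) (h : ℝ → ℝ) (x : ℝ)
    (hx : ¬ (0 ≤ x ∧ x < (v.length : ℝ) * w)) : flock w v h x = 0 := by
  unfold flock
  apply Finset.sum_eq_zero
  intro n hn
  have hn' : n < v.length := Finset.mem_range.mp hn
  rw [if_neg]
  rintro ⟨ha, hb⟩
  apply hx
  constructor
  · have : (0:ℝ) ≤ (n:ℝ) * w := by positivity
    linarith
  · have : ((n:ℝ) + 1) * w ≤ (v.length : ℝ) * w := by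
      apply mul_le_mul_of_nonneg_right _ hw
      have : (n + 1 : ℕ) ≤ v.length := hn'
      exact_mod_cast this
    linarith

lemma flock_flock (w : ℝ) (hw : 0 ≤ w) (a b : List ℝ) (h : ℝ → ℝ) (x : ℝ) :
    flock ((b.length : ℝ) * w) a (flock w b h) x
      = flock w (a.flatMap (fun c => b.map (fun y => c * y))) h x := by
  induction a generalizing x with
  | nil => simp [flock_nil]
  | cons c t ih =>
      rw [flock_cons, List.flatMap_cons, flock_append, ih, List.length_map]
      congr 1
      rw [flock_map_mul]
      by_cases hc : 0 ≤ x ∧ x < (b.length : ℝ) * w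
      · rw [if_pos hc]
      · rw [if_neg hc, flock_eq_zero w hw b h x hc, mul_zero]

lemma nu_flatMap (i j : ℕ) :
    nu (i + j) = (nu i).flatMap (fun c => (nu j).map (fun y => c * y)) := by
  induction i with
  | zero => simp [nu]
  | succ k ih =>
      rw [Nat.succ_add]
      show nu (k + j) ++ (nu (k + j)).map (fun x => -x) = _
      rw [show nu (k+1) = nu k ++ (nu k).map (fun x => -x) from rfl,
        List.flatMap_append, List.flatMap_map, ih]
      congr 1
      simp only [List.map_flatMap, List.map_map]
      congr 1
      funext a
      congr 1
      funext y
      simp [neg_mul]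

lemma nu_length (k : ℕ) : (nu k).length = 2 ^ k := by
  induction k with
  | zero => rfl
  | succ n ih => show (nu n ++ _).length = _ ; simp [ih]; ring


/-- **Algebra of the flock transform (Lemma 9, additive law).**
For any base function `h : [0, w] → ℝ` and integers `i, j ≥ 0`, applying the `ν^i`-flock
transform to the `ν^j`-flock of `h` (viewed as a base function of width `2^j w`) yields the
`ν^{i+j}`-flock of `h` on `[0, 2^{i+j} w]`; in particular the flock transforms commute. -/
theorem flock_additive_law (w : ℝ) (hw : 0 < w) (h : ℝ → ℝ) (i j : ℕ) :
    ∀ x ∈ Set.Icc (0:ℝ) (2 ^ (i + j) * w),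
      flock (2 ^ j * w) (nu i) (flock w (nu j) h) x = flock w (nu (i + j)) h x ∧
      flock (2 ^ j * w) (nu i) (flock w (nu j) h) x =
        flock (2 ^ i * w) (nu j) (flock w (nu i) h) x := by
  have key : ∀ a b : ℕ, ∀ x : ℝ,
      flock (2 ^ b * w) (nu a) (flock w (nu b) h) x = flock w (nu (a + b)) h x := by
    intro a b x
    have h1 : ((nu b).length : ℝ) * w = 2 ^ b * w := by
      rw [nu_length]; push_cast; ring
    rw [← h1, flock_flock w hw.le, ← nu_flatMap]
  intro x _
  refine ⟨key i j x, ?_⟩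
  rw [key i j x, key j i x, Nat.add_comm j i]
end
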